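/- If a board is partitioned into R Merson regions and every region that is full at the start requires at least one move originating inside it, then: if the starting vacancy is in a corner region or in no region, every solution has at least R moves; if the starting vacancy is in a non-corner region, every solution has at least R - 1 moves. -/

import Mathlib

theorem card_le_card_of_pairwise_disjoint_of_forall_exists_mem {κ α β : Type*} [Fintype κ]
    [Fintype α] {s : κ → Set β} (hs : Pairwise (Function.onFun Disjoint s)) {f : α → β}
    (hf : ∀ k, ∃ a, f a ∈ s k) : Fintype.card κ ≤ Fintype.card α := by
  choose g hg using hf
  exact Fintype.card_le_of_injective g fun k l hkl =>
    hs.eq (Set.not_disjoint_iff.2 ⟨_, hg k, hkl ▸ hg l⟩)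

/-- Merson-region lower bound.  A solution has `M` moves; `origin m` is the
hole from which the first jump of move `m` originates.  The board carries `R`
pairwise disjoint Merson regions, indexed by `ι`, each of which (when full at
the start) must contain the origin of some move.  Then:
* if the starting vacancy is in a corner region or in no region (so every
  region requires a move out of it), every solution has at least `R` moves;
* if the starting vacancy is in a non-corner region `r₀` (so every region
  other than `r₀` requires a move out of it), every solution has at least
  `R - 1` moves. -/
theorem merson_region_bound {Hole ι : Type*} [Fintype ι] [DecidableEq ι]
    (R M : ℕ) (hR : Fintype.card ι = R)
    (region : ι → Set Hole)
    (hdisj : Pairwise (Function.onFun Disjoint region))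
    (origin : Fin M → Hole) :
    ((∀ r : ι, ∃ m : Fin M, origin m ∈ region r) → R ≤ M) ∧
      (∀ r₀ : ι, (∀ r : ι, r ≠ r₀ → ∃ m : Fin M, origin m ∈ region r) →
        R - 1 ≤ M) := by
  refine ⟨fun h => ?_, fun r₀ h => ?_⟩
  · simpa [hR] using card_le_card_of_pairwise_disjoint_of_forall_exists_mem hdisj h
  · have hcard := card_le_card_of_pairwise_disjoint_of_forall_exists_mem
      (hdisj.comp_of_injective Subtype.val_injective) fun r : {r : ι // r ≠ r₀} => h r r.2
    rwa [Fintype.card_subtype_compl, Fintype.card_subtype_eq, hR, Fintype.card_fin] at hcard
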